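/- arXiv:2109.04519 — 3 statements merged into one kernel-verified Lean document; each statement's English description precedes it below -/
import Mathlib

section
/- For every positive integer m, there exists a polynomial p with rational coefficients such that 𝔡^m(I,n) = p(n) for every integer n ≥ α_t. -/
/-!
Inclusion–exclusion over the subsets `J ⊆ I` expresses `𝔡^m(I,n)` through the numbers of words
in `S_n^(m)` whose descent set is contained in `J`. Such a word has no descent after
`γ = max J`, so its tail is the sorted list of the letters left over by its prefix of length `γ`:
it is determined by that prefix, which can be any word of length `γ` over `{1,…,n}` with descents
in `J` using each letter at most `m` times (this needs `γ ≤ nm`, which holds as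
`γ ≤ α_t ≤ n`). Grouping these prefixes by the set `S` of letters they use and relabelling
`S` increasingly as `{1,…,|S|}` gives `∑_k C(n,k) b_k` with `b_k` independent of `n` and
`b_k = 0` for `k > γ`: a polynomial in `n`.
-/

open Finset

/-- Sequences of length `ℓ` (positions `1..ℓ`) with entries in `{1,…,n}`,
encoded as functions `ℕ → ℕ` vanishing outside `[1, ℓ]`. -/
def Seqs (ℓ n : ℕ) : Set (ℕ → ℕ) :=
  {v | (∀ i ∈ Finset.Icc 1 ℓ, v i ∈ Finset.Icc 1 n) ∧ ∀ i, i ∉ Finset.Icc 1 ℓ → v i = 0}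

/-- Descent set of a sequence of length `ℓ`:
`Des(v) = {i ∈ {1,…,ℓ-1} : v_i > v_{i+1}}`. -/
def Des (ℓ : ℕ) (v : ℕ → ℕ) : Set ℕ :=
  {i | 1 ≤ i ∧ i < ℓ ∧ v (i + 1) < v i}

/-- Number of occurrences of the value `j` among positions `1..ℓ` of `v`. -/
def mult (ℓ : ℕ) (v : ℕ → ℕ) (j : ℕ) : ℕ :=
  ((Finset.Icc 1 ℓ).filter fun i => v i = j).card

/-- `𝔡^m(I, n)`: the number of sequences of length `n*m`, in which each of `1,…,n`
appears exactly `m` times, whose descent set is `I`. -/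
noncomputable def dP (m : ℕ) (I : Finset ℕ) (n : ℕ) : ℕ :=
  Set.ncard {w ∈ Seqs (n * m) n |
    Des (n * m) w = ↑I ∧ ∀ j ∈ Finset.Icc 1 n, mult (n * m) w j = m}

/-- `N(I, n)`: the number of sequences `v = (v_1, …, v_{α_t})` with entries in `{1,…,n}`
such that `Des v = I \ {α_t}` and `v_{α_t} ≠ 1`. -/
noncomputable def Ncount (I : Finset ℕ) (n : ℕ) : ℕ :=
  Set.ncard {v ∈ Seqs (I.sup id) n |
    Des (I.sup id) v = ↑(I.erase (I.sup id)) ∧ v (I.sup id) ≠ 1}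

/-- `D^m(I, n)`: the number of sequences `v = (v_1, …, v_{α_t})` with entries in `{1,…,n}`
such that `Des v = I \ {α_t}` and each of `1,…,n` appears at most `m` times in `v`. -/
noncomputable def Dcount (m : ℕ) (I : Finset ℕ) (n : ℕ) : ℕ :=
  Set.ncard {v ∈ Seqs (I.sup id) n |
    Des (I.sup id) v = ↑(I.erase (I.sup id)) ∧ ∀ j ∈ Finset.Icc 1 n, mult (I.sup id) v j ≤ m}

/-- `b_i(I)`: the number of sequences `v = (v_1, …, v_{α_t})` with entries in `{1,…,i+1}`
such that `Des v = I \ {α_t}`, every number in `{2,…,i+1}` occurs in `v`, and `v_{α_t} ≠ 1`. -/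
noncomputable def bcoef (I : Finset ℕ) (i : ℕ) : ℕ :=
  Set.ncard {v ∈ Seqs (I.sup id) (i + 1) |
    Des (I.sup id) v = ↑(I.erase (I.sup id)) ∧
    (∀ l ∈ Finset.Icc 2 (i + 1), ∃ j ∈ Finset.Icc 1 (I.sup id), v j = l) ∧
    v (I.sup id) ≠ 1}

/-- `L(I)`: the length of the longest run of consecutive integers contained in `I`. -/
def longestRun (I : Finset ℕ) : ℕ :=
  I.sup fun a => ((Finset.Icc a (I.sup id)).filter fun b => Finset.Icc a b ⊆ I).card

/-- `alphaVal I k` is the `k`-th smallest element of `I` (`1`-indexed), with `alphaVal I 0 = 0`. -/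
def alphaVal (I : Finset ℕ) (k : ℕ) : ℕ :=
  if k = 0 then 0 else (I.sort (· ≤ ·)).getD (k - 1) 0

/-- For a composition `A = (a_1,…,a_s)` of `t = |I|`, `sigmaC I A i` is
`σ_{i+1} = β_{a_1+⋯+a_i+1} + ⋯ + β_{a_1+⋯+a_{i+1}}`, where `β` is the sequence of first
differences of `(0, α_1, …, α_t)`; by telescoping this equals
`α_{a_1+⋯+a_{i+1}} - α_{a_1+⋯+a_i}`. -/
def sigmaC (I : Finset ℕ) {t : ℕ} (A : Composition t) (i : ℕ) : ℕ :=
  alphaVal I (A.sizeUpTo (i + 1)) - alphaVal I (A.sizeUpTo i)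

/-- `C(A, I)` for a composition `A = (a_1,…,a_r)`: the number of sequences
`v = (v_1, …, v_{α_t})` with entries in `{1,…,r}` such that `Des v = I \ {α_t}`
and the number `j` appears exactly `a_j` times in `v`, for each `j ∈ {1,…,r}`. -/
noncomputable def Ccount (I : Finset ℕ) {N : ℕ} (A : Composition N) : ℕ :=
  Set.ncard {v ∈ Seqs (I.sup id) A.length |
    Des (I.sup id) v = ↑(I.erase (I.sup id)) ∧
    ∀ j ∈ Finset.Icc 1 A.length, mult (I.sup id) v j = A.blocks.getD (j - 1) 0}

/-- The generalized binomial coefficient `C(a, i) = a(a-1)⋯(a-i+1)/i!` for an integer `a`. -/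
def genChoose (a : ℤ) (i : ℕ) : ℚ :=
  (∏ j ∈ Finset.range i, ((a : ℚ) - (j : ℚ))) / (Nat.factorial i)

section

open Classical

theorem sum_powerset_neg_one_pow_mul_sum_powerset {α R : Type*} [DecidableEq α] [CommRing R]
    (g : Finset α → R) (I : Finset α) :
    ∑ J ∈ I.powerset, (-1) ^ #(I \ J) * ∑ K ∈ J.powerset, g K = g I := by
  simp_rw [mul_sum]
  rw [sum_comm' (t' := I.powerset) (s' := fun K => Icc K I) fun J K => by
    simp only [mem_powerset, mem_Icc]
    exact ⟨fun h => ⟨⟨h.2, h.1⟩, h.2.trans h.1⟩, fun h => ⟨h.1.2, h.1.1⟩⟩]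
  rw [sum_eq_single_of_mem I (mem_powerset_self I) ?_]
  · simp
  intro K hK hKI
  have hKI' : K ⊆ I := mem_powerset.1 hK
  have hne : (I \ K).Nonempty := sdiff_nonempty.2 fun h => hKI (hKI'.antisymm h)
  have hsign : ∑ T ∈ (I \ K).powerset, (-1 : R) ^ #T = 0 := by
    simpa using congrArg (Int.cast : ℤ → R) (sum_powerset_neg_one_pow_card_of_nonempty hne)
  rw [← sum_mul]
  refine mul_eq_zero_of_left (.trans ?_ hsign) _
  refine sum_nbij' (I \ ·) (I \ ·) ?_ ?_ ?_ ?_ fun _ _ => rfl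
  · intro J hJ
    simp only [mem_Icc, mem_powerset] at hJ ⊢
    exact sdiff_subset_sdiff le_rfl hJ.1
  · intro T hT
    simp only [mem_Icc, mem_powerset] at hT ⊢
    exact ⟨subset_sdiff.2 ⟨hKI', disjoint_of_subset_right hT disjoint_sdiff⟩, sdiff_subset⟩
  · intro J hJ
    exact Finset.sdiff_sdiff_eq_self (mem_Icc.1 hJ).2
  · intro T hT
    exact Finset.sdiff_sdiff_eq_self ((mem_powerset.1 hT).trans sdiff_subset)

theorem card_filter_eq_sum_powerset_neg_one_pow {α β R : Type*} [DecidableEq α] [CommRing R]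
    (s : Finset β) (f : β → Finset α) (I : Finset α) :
    (#{x ∈ s | f x = I} : R) = ∑ J ∈ I.powerset, (-1) ^ #(I \ J) * (#{x ∈ s | f x ⊆ J} : R) := by
  rw [← sum_powerset_neg_one_pow_mul_sum_powerset (fun K => (#{x ∈ s | f x = K} : R)) I]
  refine sum_congr rfl fun J _ => ?_
  rw [card_eq_sum_card_fiberwise (s := {x ∈ s | f x ⊆ J}) (t := J.powerset) fun x hx =>
    mem_powerset.2 (mem_filter.1 hx).2, Nat.cast_sum]
  refine congrArg _ (sum_congr rfl fun K hK => ?_)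
  rw [filter_filter]
  congr 2
  exact filter_congr fun x _ => ⟨fun h => ⟨h ▸ mem_powerset.1 hK, h⟩, And.right⟩

noncomputable def words (ℓ : ℕ) (A : Finset ℕ) : Finset (ℕ → ℕ) :=
  ((Icc 1 ℓ).pi fun _ => A).image fun f i => if h : i ∈ Icc 1 ℓ then f i h else 0

lemma mem_words {ℓ : ℕ} {A : Finset ℕ} {v : ℕ → ℕ} :
    v ∈ words ℓ A ↔ (∀ i ∈ Icc 1 ℓ, v i ∈ A) ∧ ∀ i ∉ Icc 1 ℓ, v i = 0 := by
  constructor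
  · intro h
    obtain ⟨f, hf, rfl⟩ := mem_image.1 h
    exact ⟨fun i hi => by simpa [hi] using mem_pi.1 hf i hi, fun i hi => by simp [hi]⟩
  · rintro ⟨hA, h0⟩
    refine mem_image.2 ⟨fun i _ => v i, mem_pi.2 hA, funext fun i => ?_⟩
    split_ifs with hi
    · rfl
    · exact (h0 i hi).symm

lemma coe_words (ℓ n : ℕ) : (words ℓ (Icc 1 n) : Set (ℕ → ℕ)) = Seqs ℓ n := by
  ext v
  simp only [mem_coe, mem_words]
  rfl

def descents (ℓ : ℕ) (v : ℕ → ℕ) : Finset ℕ := {i ∈ Ico 1 ℓ | v (i + 1) < v i}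

lemma mem_descents {ℓ : ℕ} {v : ℕ → ℕ} {i : ℕ} :
    i ∈ descents ℓ v ↔ 1 ≤ i ∧ i < ℓ ∧ v (i + 1) < v i := by
  simp [descents, and_assoc]

lemma coe_descents (ℓ : ℕ) (v : ℕ → ℕ) : (descents ℓ v : Set ℕ) = Des ℓ v := by
  ext i
  simp [mem_descents, Des]

noncomputable def multiperms (m n : ℕ) : Finset (ℕ → ℕ) :=
  {w ∈ words (n * m) (Icc 1 n) | ∀ j ∈ Icc 1 n, mult (n * m) w j = m}

lemma dP_eq_card (m : ℕ) (I : Finset ℕ) (n : ℕ) :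
    dP m I n = #{w ∈ multiperms m n | descents (n * m) w = I} := by
  rw [dP, ← Set.ncard_coe_finset]
  congr 1
  ext w
  simp only [multiperms, coe_filter, mem_filter, ← mem_coe (s := words _ _), coe_words,
    ← coe_descents, coe_inj, Set.mem_ofPred_eq]
  tauto

section Prefix

variable {ℓ L : ℕ}

lemma mult_congr {v w : ℕ → ℕ} (h : ∀ i ∈ Icc 1 ℓ, v i = w i) (j : ℕ) :
    mult ℓ v j = mult ℓ w j :=
  congrArg card (filter_congr fun i hi => by rw [h i hi])

lemma descents_congr {v w : ℕ → ℕ} (h : ∀ i ∈ Icc 1 ℓ, v i = w i) :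
    descents ℓ v = descents ℓ w := by
  refine filter_congr fun i hi => ?_
  rw [mem_Ico] at hi
  rw [h i (mem_Icc.2 ⟨hi.1, hi.2.le⟩), h (i + 1) (mem_Icc.2 ⟨by omega, hi.2⟩)]

lemma descents_mono (h : ℓ ≤ L) (w : ℕ → ℕ) : descents ℓ w ⊆ descents L w :=
  fun i hi => by rw [mem_descents] at hi ⊢; omega

lemma mult_eq_zero_of_notMem {A : Finset ℕ} {v : ℕ → ℕ} (hv : v ∈ words ℓ A) {j : ℕ}
    (hj : j ∉ A) : mult ℓ v j = 0 := by
  rw [mult, card_eq_zero, filter_eq_empty_iff]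
  rintro i hi rfl
  exact hj ((mem_words.1 hv).1 i hi)

lemma sum_mult {n : ℕ} {v : ℕ → ℕ} (hv : v ∈ words ℓ (Icc 1 n)) :
    ∑ j ∈ Icc 1 n, mult ℓ v j = ℓ := by
  have hcard : #(Icc 1 ℓ) = ℓ := by simp
  conv_rhs => rw [← hcard, card_eq_sum_card_fiberwise (mem_words.1 hv).1]
  rfl

def suffix (ℓ L : ℕ) (w : ℕ → ℕ) : List ℕ := (List.range' (ℓ + 1) (L - ℓ)).map w

lemma length_suffix (w : ℕ → ℕ) : (suffix ℓ L w).length = L - ℓ := by simp [suffix]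

lemma getElem_suffix (w : ℕ → ℕ) {k : ℕ} (hk : k < (suffix ℓ L w).length) :
    (suffix ℓ L w)[k] = w (ℓ + 1 + k) := by simp [suffix]

lemma mult_eq_add_count_suffix (h : ℓ ≤ L) (w : ℕ → ℕ) (j : ℕ) :
    mult L w j = mult ℓ w j + (suffix ℓ L w).count j := by
  have hsplit : Icc 1 L = Icc 1 ℓ ∪ Ioc ℓ L := by
    ext
    simp only [mem_union, mem_Icc, mem_Ioc]
    omega
  have hdisj : Disjoint (Icc 1 ℓ) (Ioc ℓ L) := disjoint_left.2 fun i hi hi' => by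
    rw [mem_Icc] at hi
    rw [mem_Ioc] at hi'
    omega
  rw [mult, mult, hsplit, filter_union, card_union_of_disjoint (disjoint_filter_filter hdisj),
    ← Multiset.coe_count, suffix, ← Multiset.map_coe, Multiset.count_map]
  simp_rw [eq_comm (a := j)]
  -- the underlying list of `Ioc ℓ L` is `List.range' (ℓ + 1) (L - ℓ)`
  rfl

lemma mult_mono (h : ℓ ≤ L) (w : ℕ → ℕ) (j : ℕ) : mult ℓ w j ≤ mult L w j :=
  (mult_eq_add_count_suffix h w j).ge.trans' (Nat.le_add_right _ _)

lemma pairwise_suffix_iff (w : ℕ → ℕ) :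
    (suffix ℓ L w).Pairwise (· ≤ ·) ↔ ∀ i ∈ descents L w, i ≤ ℓ := by
  rw [← List.isChain_iff_pairwise, List.isChain_iff_getElem]
  simp only [getElem_suffix, length_suffix, mem_descents]
  constructor
  · rintro h i ⟨-, hiL, hdes⟩
    by_contra hi
    have := h (i - ℓ - 1) (by omega)
    rw [show ℓ + 1 + (i - ℓ - 1) = i by omega, show ℓ + 1 + (i - ℓ - 1 + 1) = i + 1 by omega]
      at this
    omega
  · intro h k hk
    by_contra hlt
    have := h (ℓ + 1 + k) ⟨by omega, by omega, by rwa [← add_assoc, not_le] at hlt⟩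
    omega

def truncate (ℓ : ℕ) (w : ℕ → ℕ) : ℕ → ℕ := fun i => if i ≤ ℓ then w i else 0

def appendWord (ℓ : ℕ) (v : ℕ → ℕ) (l : List ℕ) : ℕ → ℕ :=
  fun i => if i ≤ ℓ then v i else l.getD (i - ℓ - 1) 0

lemma truncate_eq_of_le {w : ℕ → ℕ} {i : ℕ} (hi : i ∈ Icc 1 ℓ) : truncate ℓ w i = w i :=
  if_pos (mem_Icc.1 hi).2

lemma appendWord_eq_of_le {v : ℕ → ℕ} {l : List ℕ} {i : ℕ} (hi : i ∈ Icc 1 ℓ) :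
    appendWord ℓ v l i = v i :=
  if_pos (mem_Icc.1 hi).2

lemma truncate_mem_words (h : ℓ ≤ L) {A : Finset ℕ} {w : ℕ → ℕ} (hw : w ∈ words L A) :
    truncate ℓ w ∈ words ℓ A := by
  obtain ⟨hval, hzero⟩ := mem_words.1 hw
  refine mem_words.2 ⟨fun i hi => ?_, fun i hi => ?_⟩
  · rw [truncate_eq_of_le hi]
    exact hval i (mem_Icc.2 ⟨(mem_Icc.1 hi).1, (mem_Icc.1 hi).2.trans h⟩)
  · unfold truncate
    split_ifs
    · exact hzero i (by rw [mem_Icc] at hi ⊢; omega)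
    · rfl

lemma appendWord_mem_words (h : ℓ ≤ L) {A : Finset ℕ} {v : ℕ → ℕ} (hv : v ∈ words ℓ A)
    {l : List ℕ} (hlA : ∀ x ∈ l, x ∈ A) (hl : l.length = L - ℓ) :
    appendWord ℓ v l ∈ words L A := by
  obtain ⟨hval, hzero⟩ := mem_words.1 hv
  refine mem_words.2 ⟨fun i hi => ?_, fun i hi => ?_⟩ <;> unfold appendWord <;>
    split_ifs with hiℓ <;> rw [mem_Icc] at hi
  · exact hval i (mem_Icc.2 ⟨hi.1, hiℓ⟩)
  · rw [List.getD_eq_getElem _ _ (by omega)]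
    exact hlA _ (List.getElem_mem _)
  · exact hzero i (by rw [mem_Icc]; omega)
  · exact List.getD_eq_default _ _ (by omega)

lemma truncate_appendWord {v : ℕ → ℕ} (hv : ∀ i, ℓ < i → v i = 0) (l : List ℕ) :
    truncate ℓ (appendWord ℓ v l) = v := by
  funext i
  unfold truncate appendWord
  split_ifs with hi
  · rfl
  · exact (hv i (by omega)).symm

lemma appendWord_truncate_suffix {w : ℕ → ℕ} (h : ℓ ≤ L) (hw : ∀ i, L < i → w i = 0) :
    appendWord ℓ (truncate ℓ w) (suffix ℓ L w) = w := by
  funext i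
  unfold appendWord truncate
  split_ifs with hi
  · rfl
  · by_cases hiL : i ≤ L
    · rw [List.getD_eq_getElem _ _ (by rw [length_suffix]; omega), getElem_suffix]
      congr 1
      omega
    · rw [List.getD_eq_default _ _ (by rw [length_suffix]; omega), hw i (by omega)]

lemma suffix_appendWord (v : ℕ → ℕ) {l : List ℕ} (hl : l.length = L - ℓ) :
    suffix ℓ L (appendWord ℓ v l) = l := by
  refine List.ext_getElem (by rw [length_suffix, hl]) fun k hk _ => ?_
  rw [getElem_suffix, appendWord, if_neg (by omega), List.getD_eq_getElem _ _ (by omega)]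
  congr 1
  omega

lemma mult_appendWord (h : ℓ ≤ L) (v : ℕ → ℕ) {l : List ℕ} (hl : l.length = L - ℓ) (j : ℕ) :
    mult L (appendWord ℓ v l) j = mult ℓ v j + l.count j := by
  rw [mult_eq_add_count_suffix h, suffix_appendWord v hl,
    mult_congr (fun i hi => appendWord_eq_of_le hi)]

lemma descents_appendWord_subset (v : ℕ → ℕ) {l : List ℕ} (hl : l.length = L - ℓ)
    (hsorted : l.Pairwise (· ≤ ·)) : descents L (appendWord ℓ v l) ⊆ insert ℓ (descents ℓ v) := by
  intro i hi
  have hiℓ : i ≤ ℓ := (pairwise_suffix_iff _).1 (by rwa [suffix_appendWord v hl]) i hi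
  rcases hiℓ.lt_or_eq with hlt | rfl
  · rw [mem_insert, ← descents_congr fun i hi => appendWord_eq_of_le (l := l) hi, mem_descents]
    rw [mem_descents] at hi
    exact Or.inr ⟨hi.1, hlt, hi.2.2⟩
  · exact mem_insert_self i _

end Prefix

noncomputable def sortedCompletion (m n ℓ : ℕ) (v : ℕ → ℕ) : List ℕ :=
  (∑ j ∈ Icc 1 n, Multiset.replicate (m - mult ℓ v j) j).sort (· ≤ ·)

section Completion

variable {m n ℓ : ℕ} {v : ℕ → ℕ}

lemma count_sortedCompletion (j : ℕ) :
    (sortedCompletion m n ℓ v).count j = if j ∈ Icc 1 n then m - mult ℓ v j else 0 := by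
  rw [← Multiset.coe_count, sortedCompletion, Multiset.sort_eq, Multiset.count_sum']
  simp_rw [Multiset.count_replicate]
  exact sum_ite_eq' _ _ _

lemma mem_sortedCompletion {j : ℕ} (hj : j ∈ sortedCompletion m n ℓ v) : j ∈ Icc 1 n := by
  by_contra h
  rw [← List.count_pos_iff, count_sortedCompletion, if_neg h] at hj
  exact lt_irrefl 0 hj

lemma pairwise_sortedCompletion : (sortedCompletion m n ℓ v).Pairwise (· ≤ ·) :=
  Multiset.pairwise_sort _ _

lemma length_sortedCompletion (hv : v ∈ words ℓ (Icc 1 n)) (hm : ∀ j, mult ℓ v j ≤ m) :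
    (sortedCompletion m n ℓ v).length = n * m - ℓ := by
  rw [← Multiset.coe_card, sortedCompletion, Multiset.sort_eq, Multiset.card_sum]
  simp_rw [Multiset.card_replicate]
  rw [sum_tsub_distrib _ fun j _ => hm j, sum_mult hv, sum_const, Nat.card_Icc, smul_eq_mul,
    Nat.add_sub_cancel]

end Completion

noncomputable def cappedWords (m : ℕ) (J : Finset ℕ) (ℓ : ℕ) (A : Finset ℕ) : Finset (ℕ → ℕ) :=
  {v ∈ words ℓ A | descents ℓ v ⊆ J ∧ ∀ j, mult ℓ v j ≤ m}

section SortedTail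

variable {m n : ℕ} {J : Finset ℕ}

lemma truncate_mem_cappedWords (hJ : J.sup id ≤ n * m) {w : ℕ → ℕ} (hw : w ∈ multiperms m n)
    (hdes : descents (n * m) w ⊆ J) :
    truncate (J.sup id) w ∈ cappedWords m J (J.sup id) (Icc 1 n) := by
  obtain ⟨hwords, hmult⟩ := mem_filter.1 hw
  have hprefix : ∀ i ∈ Icc 1 (J.sup id), truncate (J.sup id) w i = w i :=
    fun i hi => truncate_eq_of_le hi
  refine mem_filter.2 ⟨truncate_mem_words hJ hwords, ?_, fun j => ?_⟩
  · rw [descents_congr hprefix]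
    exact (descents_mono hJ w).trans hdes
  · rw [mult_congr hprefix]
    refine (mult_mono hJ w j).trans ?_
    by_cases hj : j ∈ Icc 1 n
    · exact (hmult j hj).le
    · exact (mult_eq_zero_of_notMem hwords hj).trans_le (Nat.zero_le m)

lemma sup_id_mem_of_ne_zero (h : J.sup id ≠ 0) : J.sup id ∈ J := by
  have hne : J.Nonempty := nonempty_iff_ne_empty.2 fun hJ => h (by simp [hJ])
  obtain ⟨a, ha, hsup⟩ := sup_mem_of_nonempty (f := id) hne
  rwa [← hsup]

lemma appendWord_sortedCompletion_mem (hJ : J.sup id ≤ n * m) {v : ℕ → ℕ}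
    (hv : v ∈ cappedWords m J (J.sup id) (Icc 1 n)) :
    appendWord (J.sup id) v (sortedCompletion m n (J.sup id) v) ∈
      {w ∈ multiperms m n | descents (n * m) w ⊆ J} := by
  obtain ⟨hwords, hdes, hmult⟩ := mem_filter.1 hv
  have hlen := length_sortedCompletion hwords hmult
  refine mem_filter.2 ⟨mem_filter.2 ⟨appendWord_mem_words hJ hwords
    (fun _ => mem_sortedCompletion) hlen, fun j hj => ?_⟩, fun i hi => ?_⟩
  · rw [mult_appendWord hJ v hlen, count_sortedCompletion, if_pos hj]
    have := hmult j
    omega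
  · rcases mem_insert.1 (descents_appendWord_subset v hlen pairwise_sortedCompletion hi)
      with rfl | hi
    · exact sup_id_mem_of_ne_zero (Nat.one_le_iff_ne_zero.1 (mem_descents.1 hi).1)
    · exact hdes hi

lemma sortedCompletion_truncate (hJ : J.sup id ≤ n * m) {w : ℕ → ℕ} (hw : w ∈ multiperms m n)
    (hdes : descents (n * m) w ⊆ J) :
    sortedCompletion m n (J.sup id) (truncate (J.sup id) w) = suffix (J.sup id) (n * m) w := by
  obtain ⟨hwords, hmult⟩ := mem_filter.1 hw
  have hsorted : (suffix (J.sup id) (n * m) w).Pairwise (· ≤ ·) :=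
    (pairwise_suffix_iff w).2 fun i hi => le_sup (f := id) (hdes hi)
  refine List.Perm.eq_of_pairwise' pairwise_sortedCompletion hsorted
    (List.perm_iff_count.2 fun j => ?_)
  have hsplit := mult_eq_add_count_suffix hJ w j
  rw [count_sortedCompletion, mult_congr (w := w) fun i hi => truncate_eq_of_le hi]
  split_ifs with hj
  · rw [hmult j hj] at hsplit
    omega
  · rw [mult_eq_zero_of_notMem hwords hj] at hsplit
    omega

theorem card_multiperms_descents_subset (hJ : J.sup id ≤ n * m) :
    #{w ∈ multiperms m n | descents (n * m) w ⊆ J} =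
      #(cappedWords m J (J.sup id) (Icc 1 n)) := by
  refine card_nbij' (truncate (J.sup id))
    (fun v => appendWord (J.sup id) v (sortedCompletion m n (J.sup id) v))
    (fun w hw => truncate_mem_cappedWords hJ (mem_filter.1 hw).1 (mem_filter.1 hw).2)
    (fun v hv => appendWord_sortedCompletion_mem hJ hv) (fun w hw => ?_) (fun v hv => ?_)
  · obtain ⟨hw, hdes⟩ := mem_filter.1 hw
    simp only [sortedCompletion_truncate hJ hw hdes]
    exact appendWord_truncate_suffix hJ fun i hi =>
      (mem_words.1 (mem_filter.1 hw).1).2 i (by rw [mem_Icc]; omega)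
  · exact truncate_appendWord (fun i hi => (mem_words.1 (mem_filter.1 hv).1).2 i
      (by rw [mem_Icc]; omega)) _

end SortedTail

def letters (ℓ : ℕ) (v : ℕ → ℕ) : Finset ℕ := (Icc 1 ℓ).image v

section Relabel

variable {m ℓ : ℕ} {J A : Finset ℕ} {φ : ℕ → ℕ}

lemma comp_mem_words (hφ0 : φ 0 = 0) {u : ℕ → ℕ} (hu : u ∈ words ℓ A) :
    φ ∘ u ∈ words ℓ (A.image φ) := by
  obtain ⟨hval, hzero⟩ := mem_words.1 hu
  exact mem_words.2 ⟨fun i hi => mem_image_of_mem φ (hval i hi),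
    fun i hi => by rw [Function.comp_apply, hzero i hi, hφ0]⟩

lemma exists_comp_eq_of_mem_words_image (hφ0 : φ 0 = 0) {v : ℕ → ℕ}
    (hv : v ∈ words ℓ (A.image φ)) : ∃ u ∈ words ℓ A, φ ∘ u = v := by
  obtain ⟨hval, hzero⟩ := mem_words.1 hv
  have hpre (i : ℕ) (hi : i ∈ Icc 1 ℓ) : ∃ a ∈ A, φ a = v i := mem_image.1 (hval i hi)
  refine ⟨fun i => if i ∈ Icc 1 ℓ then Function.invFunOn φ A (v i) else 0,
    mem_words.2 ⟨fun i hi => ?_, fun i hi => if_neg hi⟩, funext fun i => ?_⟩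
  · rw [if_pos hi]
    exact Function.invFunOn_mem (hpre i hi)
  · by_cases hi : i ∈ Icc 1 ℓ
    · rw [Function.comp_apply, if_pos hi]
      exact Function.invFunOn_eq (hpre i hi)
    · rw [Function.comp_apply, if_neg hi, hφ0, hzero i hi]

lemma comp_injOn_words (hφ : Set.InjOn φ A) :
    Set.InjOn (φ ∘ ·) (words ℓ A : Set (ℕ → ℕ)) := by
  intro u hu u' hu' h
  funext i
  by_cases hi : i ∈ Icc 1 ℓ
  · exact hφ ((mem_words.1 hu).1 i hi) ((mem_words.1 hu').1 i hi) (congrFun h i)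
  · rw [(mem_words.1 hu).2 i hi, (mem_words.1 hu').2 i hi]

lemma descents_comp (hφ : StrictMonoOn φ A) {u : ℕ → ℕ} (hu : u ∈ words ℓ A) :
    descents ℓ (φ ∘ u) = descents ℓ u := by
  refine filter_congr fun i hi => ?_
  rw [mem_Ico] at hi
  have hval := (mem_words.1 hu).1
  exact hφ.lt_iff_lt (hval _ (mem_Icc.2 ⟨by omega, hi.2⟩)) (hval _ (mem_Icc.2 ⟨hi.1, hi.2.le⟩))

lemma mult_comp (hφ : Set.InjOn φ A) {u : ℕ → ℕ} (hu : u ∈ words ℓ A) {a : ℕ} (ha : a ∈ A) :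
    mult ℓ (φ ∘ u) (φ a) = mult ℓ u a :=
  congrArg card (filter_congr fun i hi => hφ.eq_iff ((mem_words.1 hu).1 i hi) ha)

lemma letters_comp_eq_image_iff (hφ : Set.InjOn φ A) {u : ℕ → ℕ} (hu : u ∈ words ℓ A) :
    letters ℓ (φ ∘ u) = A.image φ ↔ letters ℓ u = A := by
  have hcomp : letters ℓ (φ ∘ u) = (letters ℓ u).image φ := by simp [letters, image_image]
  have hsub : letters ℓ u ⊆ A := image_subset_iff.2 (mem_words.1 hu).1
  rw [hcomp, image_eq_image_iff_of_injOn hφ hsub subset_rfl]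

lemma comp_mem_cappedWords_iff (hφ : StrictMonoOn φ A) (hφ0 : φ 0 = 0) {u : ℕ → ℕ}
    (hu : u ∈ words ℓ A) :
    φ ∘ u ∈ cappedWords m J ℓ (A.image φ) ↔ u ∈ cappedWords m J ℓ A := by
  simp only [cappedWords, mem_filter, comp_mem_words hφ0 hu, hu, descents_comp hφ hu, true_and]
  refine and_congr_right fun _ => ⟨fun h j => ?_, fun h b => ?_⟩
  · by_cases hj : j ∈ A
    · exact (mult_comp hφ.injOn hu hj).ge.trans (h (φ j))
    · exact (mult_eq_zero_of_notMem hu hj).trans_le (Nat.zero_le m)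
  · by_cases hb : b ∈ A.image φ
    · obtain ⟨a, ha, rfl⟩ := mem_image.1 hb
      exact (mult_comp hφ.injOn hu ha).trans_le (h a)
    · exact (mult_eq_zero_of_notMem (comp_mem_words hφ0 hu) hb).trans_le (Nat.zero_le m)

theorem card_cappedWords_letters_image (hφ : StrictMonoOn φ A) (hφ0 : φ 0 = 0) :
    #{u ∈ cappedWords m J ℓ A | letters ℓ u = A} =
      #{v ∈ cappedWords m J ℓ (A.image φ) | letters ℓ v = A.image φ} := by
  have hwords {u : ℕ → ℕ} (hu : u ∈ {u ∈ cappedWords m J ℓ A | letters ℓ u = A}) :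
      u ∈ words ℓ A :=
    (mem_filter.1 (mem_filter.1 hu).1).1
  refine card_nbij (φ ∘ ·) (fun u hu => ?_) (fun u hu u' hu' h => ?_) (fun v hv => ?_)
  · obtain ⟨hcapped, hlet⟩ := mem_filter.1 hu
    exact mem_filter.2 ⟨(comp_mem_cappedWords_iff hφ hφ0 (hwords hu)).2 hcapped,
      (letters_comp_eq_image_iff hφ.injOn (hwords hu)).2 hlet⟩
  · exact comp_injOn_words hφ.injOn (hwords hu) (hwords hu') h
  · obtain ⟨hcapped, hlet⟩ := mem_filter.1 hv
    obtain ⟨u, hu, rfl⟩ := exists_comp_eq_of_mem_words_image hφ0 (mem_filter.1 hcapped).1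
    exact ⟨u, mem_filter.2 ⟨(comp_mem_cappedWords_iff hφ hφ0 hu).1 hcapped,
      (letters_comp_eq_image_iff hφ.injOn hu).1 hlet⟩, rfl⟩

end Relabel

lemma alphaVal_eq_orderEmbOfFin (S : Finset ℕ) {j : ℕ} (hj : j ∈ Icc 1 #S) :
    alphaVal S j = S.orderEmbOfFin rfl ⟨j - 1, by rw [mem_Icc] at hj; omega⟩ := by
  rw [mem_Icc] at hj
  rw [alphaVal, if_neg (by omega), orderEmbOfFin_apply,
    List.getD_eq_getElem _ _ (by rw [length_sort]; omega)]
  rfl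

lemma strictMonoOn_alphaVal (S : Finset ℕ) : StrictMonoOn (alphaVal S) (Icc 1 #S : Set ℕ) := by
  intro a ha b hb hab
  rw [mem_coe] at ha hb
  rw [alphaVal_eq_orderEmbOfFin S ha, alphaVal_eq_orderEmbOfFin S hb, OrderEmbedding.lt_iff_lt,
    Fin.mk_lt_mk]
  rw [mem_Icc] at ha
  omega

lemma image_alphaVal (S : Finset ℕ) : (Icc 1 #S).image (alphaVal S) = S := by
  ext s
  rw [mem_image]
  constructor
  · rintro ⟨j, hj, rfl⟩
    rw [alphaVal_eq_orderEmbOfFin S hj]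
    exact orderEmbOfFin_mem S rfl _
  · intro hs
    obtain ⟨i, rfl⟩ : s ∈ Set.range (S.orderEmbOfFin rfl) := by rwa [range_orderEmbOfFin]
    have hi : (i : ℕ) + 1 ∈ Icc 1 #S := mem_Icc.2 ⟨by omega, i.2⟩
    exact ⟨i + 1, hi, by rw [alphaVal_eq_orderEmbOfFin S hi]; rfl⟩

noncomputable def surjCount (m : ℕ) (J : Finset ℕ) (ℓ k : ℕ) : ℕ :=
  #{u ∈ cappedWords m J ℓ (Icc 1 k) | letters ℓ u = Icc 1 k}

section Letters

variable {m ℓ : ℕ} {J : Finset ℕ}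

lemma card_cappedWords_letters_eq (S : Finset ℕ) :
    #{v ∈ cappedWords m J ℓ S | letters ℓ v = S} = surjCount m J ℓ #S := by
  rw [surjCount, card_cappedWords_letters_image (strictMonoOn_alphaVal S) (if_pos rfl),
    image_alphaVal]

lemma filter_cappedWords_letters_eq {A B : Finset ℕ} (hAB : A ⊆ B) :
    {v ∈ cappedWords m J ℓ B | letters ℓ v = A} =
      {v ∈ cappedWords m J ℓ A | letters ℓ v = A} := by
  ext v
  simp only [cappedWords, mem_filter, mem_words, and_assoc]
  constructor
  · rintro ⟨-, h0, hrest⟩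
    exact ⟨fun i hi => hrest.2.2 ▸ mem_image_of_mem v hi, h0, hrest⟩
  · rintro ⟨hA, h0, hrest⟩
    exact ⟨fun i hi => hAB (hA i hi), h0, hrest⟩

lemma surjCount_eq_zero {k : ℕ} (hk : ℓ < k) : surjCount m J ℓ k = 0 := by
  rw [surjCount, card_eq_zero, filter_eq_empty_iff]
  intro u _ hu
  have hcard := card_image_le (s := Icc 1 ℓ) (f := u)
  rw [← letters, hu, Nat.card_Icc, Nat.card_Icc] at hcard
  omega

theorem card_cappedWords_eq_sum_choose (n : ℕ) :
    #(cappedWords m J ℓ (Icc 1 n)) = ∑ k ∈ range (ℓ + 1), n.choose k * surjCount m J ℓ k := by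
  have hlet (v) (hv : v ∈ cappedWords m J ℓ (Icc 1 n)) : letters ℓ v ∈ (Icc 1 n).powerset :=
    mem_powerset.2 (image_subset_iff.2 (mem_words.1 (mem_filter.1 hv).1).1)
  have hn : range (n + 1) ⊆ range (n + ℓ + 1) := range_subset_range.2 (by omega)
  have hℓ : range (ℓ + 1) ⊆ range (n + ℓ + 1) := range_subset_range.2 (by omega)
  calc #(cappedWords m J ℓ (Icc 1 n))
      = ∑ S ∈ (Icc 1 n).powerset, surjCount m J ℓ #S := by
        rw [card_eq_sum_card_fiberwise hlet]
        refine sum_congr rfl fun S hS => ?_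
        rw [filter_cappedWords_letters_eq (mem_powerset.1 hS), card_cappedWords_letters_eq]
    _ = ∑ k ∈ range (n + 1), n.choose k * surjCount m J ℓ k := by
        simp [sum_powerset_apply_card]
    _ = ∑ k ∈ range (ℓ + 1), n.choose k * surjCount m J ℓ k := by
        rw [sum_subset hn ?_, sum_subset hℓ ?_]
        · intro k _ hkℓ
          rw [surjCount_eq_zero (by simp at hkℓ; omega), mul_zero]
        · intro k _ hkn
          rw [Nat.choose_eq_zero_of_lt (by simp at hkn; omega), zero_mul]

end Letters

end

theorem stmt_7_general (I : Finset ℕ)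
    (m : ℕ) (hm : 1 ≤ m) :
    ∃ p : Polynomial ℚ, ∀ n : ℕ, I.sup id ≤ n → (dP m I n : ℚ) = p.eval (n : ℚ) := by
  refine ⟨∑ J ∈ I.powerset, ∑ k ∈ range (J.sup id + 1),
    Polynomial.C ((-1 : ℚ) ^ #(I \ J) * surjCount m J (J.sup id) k / k.factorial) *
      descPochhammer ℚ k, fun n hn => ?_⟩
  rw [dP_eq_card, card_filter_eq_sum_powerset_neg_one_pow, Polynomial.eval_finsetSum]
  refine sum_congr rfl fun J hJ => ?_
  have hJn : J.sup id ≤ n * m :=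
    (sup_mono (mem_powerset.1 hJ)).trans (hn.trans (Nat.le_mul_of_pos_right n hm))
  rw [card_multiperms_descents_subset hJn, card_cappedWords_eq_sum_choose,
    Polynomial.eval_finsetSum, Nat.cast_sum, mul_sum]
  refine sum_congr rfl fun k _ => ?_
  rw [Polynomial.eval_mul, Polynomial.eval_C, Nat.cast_mul, Nat.cast_choose_eq_descPochhammer_div]
  ring

/-- for every positive integer `m`, there is a polynomial `p ∈ ℚ[x]` with
`𝔡^m(I,n) = p(n)` for all integers `n ≥ α_t`. -/
theorem stmt_7 (I : Finset ℕ) (hI : I.Nonempty) (hIpos : ∀ x ∈ I, 1 ≤ x)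
    (m : ℕ) (hm : 1 ≤ m) :
    ∃ p : Polynomial ℚ, ∀ n : ℕ, I.sup id ≤ n → (dP m I n : ℚ) = p.eval (n : ℚ) :=
  stmt_7_general I m hm
end

section
/- For every positive integer n and every integer i ≥ 0, the number of sequences v = (v_1,…,v_{α_t}) with entries in {1,…,n} such that Des(v) = I \ {α_t}, v_{α_t} ≠ 1, and exactly i distinct numbers from {2,…,n} appear in v, equals C(n−1, i) · b_i(I), where C(n−1,i) is the binomial coefficient. -/
open Finset

/-!
Group the sequences by the set `S ⊆ {2,…,n}` of values `≥ 2` that they take; there are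
`C(n-1, i)` such sets with `|S| = i`. Relabelling the values `1 < s₁ < ⋯ < sᵢ` as
`1 < 2 < ⋯ < i+1` preserves descents and the condition `v_{α_t} ≠ 1`, so each group is in
bijection with the sequences counted by `b_i(I)`. Since sequences vanish off `[1, α_t]`, the
relabelling is taken to be the rank function of `{0, 1} ∪ S`, which fixes `0` and `1`.
-/

theorem finite_seqs (ℓ n : ℕ) : (Seqs ℓ n).Finite := by
  have hzero : ∀ v ∈ Seqs ℓ n, ∀ k, ℓ < k → v k = 0 := fun v hv k hk =>
    hv.2 k (by simp only [mem_Icc]; omega)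
  refine Set.Finite.of_finite_image (f := fun v (k : Fin (ℓ + 1)) => v k)
    ((Set.Finite.pi fun _ => Set.finite_Iic n).subset ?_) ?_
  · rintro _ ⟨v, hv, rfl⟩ k -
    by_cases hk : (k : ℕ) ∈ Icc 1 ℓ
    · exact (mem_Icc.1 (hv.1 k hk)).2
    · simp [hv.2 k hk]
  · intro v hv v' hv' h
    funext k
    by_cases hk : k ≤ ℓ
    · exact congrFun h ⟨k, Nat.lt_succ_of_le hk⟩
    · rw [hzero v hv k (by omega), hzero v' hv' k (by omega)]

theorem Set.ncard_eq_sum_ncard_fiberwise {α β : Type*} [DecidableEq β] {s : Set α}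
    (hs : s.Finite) {f : α → β} {t : Finset β} (H : Set.MapsTo f s t) :
    s.ncard = ∑ b ∈ t, (s ∩ f ⁻¹' {b}).ncard := by
  rw [Set.ncard_eq_toFinset_card s hs, card_eq_sum_card_fiberwise (by simpa using H)]
  refine sum_congr rfl fun b _ => ?_
  rw [Set.ncard_eq_toFinset_card _ (hs.inter_of_left _)]
  congr 1
  ext a
  simp

theorem Set.ncard_setOf_comp {α β γ : Type*} {f : β → γ} {T : Set β} (hf : Set.InjOn f T)
    {P : (α → β) → Prop} {Q : (α → γ) → Prop}
    (hPQ : ∀ v : α → β, (∀ a, v a ∈ T) → (Q (f ∘ v) ↔ P v)) :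
    {w : α → γ | (∀ a, w a ∈ f '' T) ∧ Q w}.ncard = {v : α → β | (∀ a, v a ∈ T) ∧ P v}.ncard := by
  have hinj : Set.InjOn (f ∘ ·) {v : α → β | (∀ a, v a ∈ T) ∧ P v} := fun v hv v' hv' h =>
    funext fun a => hf (hv.1 a) (hv'.1 a) (congrFun h a)
  rw [← hinj.ncard_image]
  congr 1
  ext w
  constructor
  · rintro ⟨hwT, hQw⟩
    choose v hvT hvw using hwT
    have hw : f ∘ v = w := funext hvw
    exact ⟨v, ⟨hvT, (hPQ v hvT).1 (hw ▸ hQw)⟩, hw⟩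
  · rintro ⟨v, ⟨hvT, hPv⟩, rfl⟩
    exact ⟨fun a => Set.mem_image_of_mem f (hvT a), (hPQ v hvT).2 hPv⟩

theorem des_comp_of_strictMonoOn {f : ℕ → ℕ} {T : Set ℕ} (hf : StrictMonoOn f T) {v : ℕ → ℕ}
    (hv : ∀ k, v k ∈ T) (ℓ : ℕ) : Des ℓ (f ∘ v) = Des ℓ v := by
  ext k
  simp only [Des, Set.mem_ofPred_eq, Function.comp_apply, hf.lt_iff_lt (hv _) (hv _)]

/-- The conditions of the theorem that survive an order-preserving relabelling of the values. -/
def IsPattern (ℓ : ℕ) (D S : Set ℕ) (v : ℕ → ℕ) : Prop :=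
  (∀ k, v k = 0 ↔ k ∉ Icc 1 ℓ) ∧ Des ℓ v = D ∧ v ℓ ≠ 1 ∧ ∀ s ∈ S, ∃ k ∈ Icc 1 ℓ, v k = s

theorem isPattern_comp_iff {f : ℕ → ℕ} {T : Set ℕ} (hf : StrictMonoOn f T)
    (h0 : 0 ∈ T) (h1 : 1 ∈ T) (hf0 : f 0 = 0) (hf1 : f 1 = 1) {S : Set ℕ} (hS : S ⊆ T)
    {v : ℕ → ℕ} (hv : ∀ k, v k ∈ T) (ℓ : ℕ) (D : Set ℕ) :
    IsPattern ℓ D (f '' S) (f ∘ v) ↔ IsPattern ℓ D S v := by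
  have heq : ∀ k, ∀ x ∈ T, f (v k) = f x ↔ v k = x := fun k x hx => hf.injOn.eq_iff (hv k) hx
  have hS' : ∀ s ∈ S, (∃ k ∈ Icc 1 ℓ, f (v k) = f s) ↔ ∃ k ∈ Icc 1 ℓ, v k = s :=
    fun s hs => by simp only [heq _ _ (hS hs)]
  have hzero : ∀ k, f (v k) = 0 ↔ v k = 0 := fun k => by
    simpa only [hf0] using heq k 0 h0
  have hone : ∀ k, f (v k) = 1 ↔ v k = 1 := fun k => by
    simpa only [hf1] using heq k 1 h1
  unfold IsPattern
  rw [des_comp_of_strictMonoOn hf hv, Set.forall_mem_image]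
  simp only [Function.comp_apply, ne_eq, hzero, hone]
  exact and_congr_right' (and_congr_right' (and_congr_right' (forall₂_congr hS')))

def rankIn (T : Finset ℕ) (x : ℕ) : ℕ := #{t ∈ T | t < x}

theorem rankIn_strictMonoOn (T : Finset ℕ) : StrictMonoOn (rankIn T) T := by
  intro x hx y _ hxy
  refine card_lt_card ((ssubset_iff_of_subset ?_).2 ⟨x, ?_, ?_⟩)
  · intro t ht
    simp only [mem_filter] at ht ⊢
    exact ⟨ht.1, ht.2.trans hxy⟩
  · simpa using ⟨hx, hxy⟩
  · simp

theorem image_rankIn (T : Finset ℕ) : T.image (rankIn T) = range #T := by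
  refine eq_of_subset_of_card_le (fun r hr => ?_) ?_
  · obtain ⟨t, ht, rfl⟩ := mem_image.1 hr
    exact mem_range.2 (card_lt_card ((ssubset_iff_of_subset (filter_subset _ _)).2
      ⟨t, ht, by simp⟩))
  · rw [card_range, card_image_of_injOn (rankIn_strictMonoOn T).injOn]

theorem ncard_isPattern_relabel (ℓ : ℕ) (D : Set ℕ) {S : Finset ℕ} (hS : ∀ s ∈ S, 2 ≤ s) :
    {v | (∀ k, v k ∈ insert 0 (insert 1 S)) ∧ IsPattern ℓ D S v}.ncard =
      {v | (∀ k, v k ∈ insert 0 (insert 1 (Icc 2 (#S + 1)))) ∧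
        IsPattern ℓ D (Icc 2 (#S + 1)) v}.ncard := by
  set T := insert 0 (insert 1 S) with hT
  have h0 : 0 ∈ T := mem_insert_self 0 _
  have h1 : 1 ∈ T := mem_insert_of_mem (mem_insert_self 1 S)
  have hST : S ⊆ T := (subset_insert 1 S).trans (subset_insert 0 _)
  have h0S : 0 ∉ S := fun h => by simpa using hS 0 h
  have h1S : 1 ∉ S := fun h => by simpa using hS 1 h
  have hcard : #T = #S + 2 := by
    rw [card_insert_of_notMem (by simp [h0S]), card_insert_of_notMem h1S]
  have hmono := rankIn_strictMonoOn T
  have hrank0 : rankIn T 0 = 0 := by simp [rankIn]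
  have hrank1 : rankIn T 1 = 1 := by
    rw [rankIn, card_eq_one]
    exact ⟨0, by ext t; simp +contextual [hT]⟩
  have himgT : T.image (rankIn T) = insert 0 (insert 1 (Icc 2 (#S + 1))) := by
    rw [image_rankIn, hcard]
    ext r
    simp only [mem_range, mem_insert, mem_Icc]
    omega
  have himgS : S.image (rankIn T) = Icc 2 (#S + 1) := by
    refine eq_of_subset_of_card_le (fun r hr => ?_) ?_
    · obtain ⟨s, hs, rfl⟩ := mem_image.1 hr
      have hlow : rankIn T 1 < rankIn T s := hmono h1 (hST hs) (hS s hs)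
      have hhigh : rankIn T s ∈ range #T := image_rankIn T ▸ mem_image_of_mem _ (hST hs)
      rw [mem_range] at hhigh
      rw [mem_Icc]
      omega
    · rw [card_image_of_injOn (hmono.injOn.mono hST), Nat.card_Icc]
      omega
  have key := Set.ncard_setOf_comp (α := ℕ) hmono.injOn (P := IsPattern ℓ D S)
    (Q := IsPattern ℓ D (Icc 2 (#S + 1))) fun v hv => by
      rw [← himgS, coe_image]
      exact isPattern_comp_iff hmono h0 h1 hrank0 hrank1 hST hv ℓ D
  rw [← coe_image, himgT] at key
  simpa only [mem_coe] using key.symm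

def valueSet (ℓ n : ℕ) (v : ℕ → ℕ) : Finset ℕ := Icc 2 n ∩ (Icc 1 ℓ).image v

theorem seqs_filter_valueSet_eq {ℓ n : ℕ} (hn : 1 ≤ n) (D : Set ℕ) {S : Finset ℕ}
    (hS : S ⊆ Icc 2 n) :
    {v ∈ Seqs ℓ n | Des ℓ v = D ∧ v ℓ ≠ 1 ∧ valueSet ℓ n v = S} =
      {v | (∀ k, v k ∈ insert 0 (insert 1 S)) ∧ IsPattern ℓ D S v} := by
  ext v
  simp only [Set.mem_ofPred_eq, Seqs, IsPattern, valueSet, Finset.ext_iff, mem_inter, mem_image]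
  constructor
  · rintro ⟨⟨hrange, hzero⟩, hD, hlast, hval⟩
    have hpos : ∀ k ∈ Icc 1 ℓ, v k ≠ 0 := fun k hk => by
      have := mem_Icc.1 (hrange k hk); omega
    refine ⟨fun k => ?_, fun k => ⟨fun h hk => hpos k hk h, hzero k⟩, hD, hlast,
      fun s hs => ((hval s).2 hs).2⟩
    by_cases hk : k ∈ Icc 1 ℓ
    · have := mem_Icc.1 (hrange k hk)
      rcases (show v k = 1 ∨ 2 ≤ v k by omega) with h | h
      · simp [h]
      · exact mem_insert_of_mem (mem_insert_of_mem
          ((hval (v k)).1 ⟨mem_Icc.2 ⟨h, this.2⟩, k, hk, rfl⟩))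
    · simp [hzero k hk]
  · rintro ⟨hvals, hsupp, hD, hlast, hatt⟩
    have hpos : ∀ k ∈ Icc 1 ℓ, v k ∈ insert 1 S := fun k hk =>
      (mem_insert.1 (hvals k)).resolve_left fun h => (hsupp k).1 h hk
    refine ⟨⟨fun k hk => ?_, fun k hk => (hsupp k).2 hk⟩, hD, hlast, fun l => ⟨?_, ?_⟩⟩
    · rcases mem_insert.1 (hpos k hk) with h | h
      · simpa [h] using hn
      · have := mem_Icc.1 (hS h); exact mem_Icc.2 ⟨by omega, this.2⟩
    · rintro ⟨hl, k, hk, rfl⟩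
      exact (mem_insert.1 (hpos k hk)).resolve_left fun h => by
        have := (mem_Icc.1 hl).1; omega
    · intro hl
      exact ⟨hS hl, hatt l hl⟩

theorem bcoef_eq_ncard_isPattern (I : Finset ℕ) (i : ℕ) :
    bcoef I i = {v | (∀ k, v k ∈ insert 0 (insert 1 (Icc 2 (i + 1)))) ∧
      IsPattern (I.sup id) (I.erase (I.sup id)) (Icc 2 (i + 1)) v}.ncard := by
  rw [bcoef, ← seqs_filter_valueSet_eq (Nat.le_add_left 1 i) _ subset_rfl]
  congr 1
  ext v
  simp only [Set.mem_ofPred_eq, valueSet, inter_eq_left, subset_iff, mem_image]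
  tauto

theorem ncard_seqs_filter_valueSet_eq_bcoef (I : Finset ℕ) {n : ℕ} (hn : 1 ≤ n) {S : Finset ℕ}
    (hS : S ⊆ Icc 2 n) :
    {v ∈ Seqs (I.sup id) n | Des (I.sup id) v = ↑(I.erase (I.sup id)) ∧ v (I.sup id) ≠ 1 ∧
      valueSet (I.sup id) n v = S}.ncard = bcoef I #S := by
  rw [seqs_filter_valueSet_eq hn _ hS, bcoef_eq_ncard_isPattern,
    ncard_isPattern_relabel _ _ fun s hs => (mem_Icc.1 (hS hs)).1]

theorem stmt_10_general (I : Finset ℕ) (n : ℕ) (hn : 1 ≤ n) (i : ℕ) :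
    Set.ncard {v ∈ Seqs (I.sup id) n |
      Des (I.sup id) v = ↑(I.erase (I.sup id)) ∧ v (I.sup id) ≠ 1 ∧
      Set.ncard {l | l ∈ Finset.Icc 2 n ∧ ∃ k ∈ Finset.Icc 1 (I.sup id), v k = l} = i} =
    (n - 1).choose i * bcoef I i := by
  set L := I.sup id
  have hvalues : ∀ v, {l | l ∈ Icc 2 n ∧ ∃ k ∈ Icc 1 L, v k = l} = (valueSet L n v : Set ℕ) :=
    fun v => by ext; simp [valueSet]
  simp_rw [hvalues, Set.ncard_coe_finset]
  set X := {v ∈ Seqs L n | Des L v = ↑(I.erase L) ∧ v L ≠ 1 ∧ #(valueSet L n v) = i}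
  have hmaps : Set.MapsTo (valueSet L n) X (powersetCard i (Icc 2 n)) := fun v hv =>
    mem_powersetCard.2 ⟨inter_subset_left, hv.2.2.2⟩
  have hfiber : ∀ S ∈ powersetCard i (Icc 2 n), (X ∩ valueSet L n ⁻¹' {S}).ncard = bcoef I i := by
    intro S hS
    obtain ⟨hsub, rfl⟩ := mem_powersetCard.1 hS
    rw [← ncard_seqs_filter_valueSet_eq_bcoef I hn hsub]
    congr 1
    ext v
    simp only [X, Set.mem_inter_iff, Set.mem_ofPred_eq, Set.mem_preimage, Set.mem_singleton_iff]
    constructor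
    · rintro ⟨⟨hseq, hD, hlast, -⟩, hval⟩
      exact ⟨hseq, hD, hlast, hval⟩
    · rintro ⟨hseq, hD, hlast, hval⟩
      exact ⟨⟨hseq, hD, hlast, hval ▸ rfl⟩, hval⟩
  rw [Set.ncard_eq_sum_ncard_fiberwise ((finite_seqs L n).subset fun v hv => hv.1) hmaps,
    sum_congr rfl hfiber, sum_const, card_powersetCard, Nat.card_Icc, smul_eq_mul,
    show n + 1 - 2 = n - 1 by omega]

/-- for a positive integer `n` and `i ≥ 0`, the number of sequences
`v = (v_1,…,v_{α_t})` with entries in `{1,…,n}`, `Des v = I \ {α_t}`, `v_{α_t} ≠ 1`,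
in which exactly `i` distinct numbers from `{2,…,n}` appear, equals `C(n-1, i) · b_i(I)`. -/
theorem stmt_10 (I : Finset ℕ) (hI : I.Nonempty) (hIpos : ∀ x ∈ I, 1 ≤ x)
    (n : ℕ) (hn : 1 ≤ n) (i : ℕ) :
    Set.ncard {v ∈ Seqs (I.sup id) n |
      Des (I.sup id) v = ↑(I.erase (I.sup id)) ∧ v (I.sup id) ≠ 1 ∧
      Set.ncard {l | l ∈ Finset.Icc 2 n ∧ ∃ k ∈ Finset.Icc 1 (I.sup id), v k = l} = i} =
    (n - 1).choose i * bcoef I i :=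
  stmt_10_general I n hn i
end

section
/- For every integer k, there exist integers a_0, a_1, …, a_{α_t} such that N(I,n) = Σ_{i=0}^{α_t} a_i · C(n+k, i) for every positive integer n, where for an integer a and nonnegative integer i, C(a,i) = a(a−1)⋯(a−i+1)/i! denotes the generalized binomial coefficient. -/
open Finset

/-!
Split the sequences counted by `N(I, n)` according to the set `S ⊆ {2, …, n}` of their values
other than `1`. Relabelling values along the order isomorphism `{1} ∪ S ≃o {1, …, |S| + 1}`
preserves descents and the condition `v_{α_t} ≠ 1`, so the fibre over `S` has `b_{|S|}(I)`
elements and `N(I, n) = ∑ᵢ C(n - 1, i) b_i(I)`, where `b_i(I) = 0` for `i > α_t`.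
Vandermonde's identity `C(n - 1, i) = ∑ₚ C(n + k, p) C(-k - 1, i - p)` rewrites this in the
basis `C(n + k, ·)` with integer coefficients.
-/

theorem genChoose_eq_choose (a : ℤ) (i : ℕ) : genChoose a i = ((Ring.choose a i : ℤ) : ℚ) := by
  have h := Ring.descPochhammer_eq_factorial_smul_choose a i
  rw [← Polynomial.eval_eq_smeval, descPochhammer_eval_eq_prod_range, nsmul_eq_mul] at h
  rw [genChoose, div_eq_iff (by positivity)]
  exact_mod_cast h.trans (mul_comm _ _)

theorem exists_sum_choose_eq_sum_choose_add (b : ℕ → ℤ) (L : ℕ) (d : ℤ) :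
    ∃ a : ℕ → ℤ, ∀ x : ℤ, ∑ i ∈ range (L + 1), b i * Ring.choose x i =
      ∑ p ∈ range (L + 1), a p * Ring.choose (x + d) p := by
  refine ⟨fun p => ∑ i ∈ Ico p (L + 1), b i * Ring.choose (-d) (i - p), fun x => ?_⟩
  calc ∑ i ∈ range (L + 1), b i * Ring.choose x i
      = ∑ i ∈ range (L + 1), ∑ p ∈ range (i + 1),
          b i * Ring.choose (-d) (i - p) * Ring.choose (x + d) p := by
        refine sum_congr rfl fun i _ => ?_
        rw [show x = x + d + -d by ring, Ring.add_choose_eq i (Commute.all _ _),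
          Nat.sum_antidiagonal_eq_sum_range_succ_mk, mul_sum]
        simp only [add_neg_cancel_right]
        exact sum_congr rfl fun p _ => by ring
    _ = ∑ p ∈ range (L + 1), ∑ i ∈ Ico p (L + 1),
          b i * Ring.choose (-d) (i - p) * Ring.choose (x + d) p :=
        sum_comm' fun i p => by simp only [mem_range, mem_Ico]; omega
    _ = _ := sum_congr rfl fun p _ => (sum_mul _ _ _).symm

theorem Set.finite_setOf_mem_and_eq_const_off {α β : Type*} (s : Finset α) (t : Set β)
    (ht : t.Finite) (c : β) :
    {v : α → β | (∀ i ∈ s, v i ∈ t) ∧ ∀ i ∉ s, v i = c}.Finite := by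
  refine Set.Finite.of_finite_image (f := fun v (i : s) => v i) ?_ ?_
  · refine (Set.Finite.pi (t := fun _ => t) fun _ => ht).subset ?_
    rintro _ ⟨v, hv, rfl⟩ i -
    exact hv.1 i i.2
  · intro v hv w hw hvw
    funext i
    by_cases hi : i ∈ s
    · exact congrFun hvw ⟨i, hi⟩
    · rw [hv.2 i hi, hw.2 i hi]

theorem Des_comp_of_strictMonoOn {ℓ : ℕ} {g v : ℕ → ℕ} {s : Set ℕ} (hg : StrictMonoOn g s)
    (hv : ∀ i ∈ Icc 1 ℓ, v i ∈ s) : Des ℓ (g ∘ v) = Des ℓ v := by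
  ext i
  simp only [Des, Set.mem_ofPred_eq, Function.comp_apply]
  refine and_congr_right fun h1 => and_congr_right fun h2 => hg.lt_iff_lt (hv _ ?_) (hv _ ?_) <;>
    simp only [mem_Icc] <;> omega

def seqsWithValues (ℓ : ℕ) (J : Set ℕ) (T : Finset ℕ) : Set (ℕ → ℕ) :=
  {v | (∀ i ∈ Icc 1 ℓ, v i ∈ insert 1 T) ∧ (∀ i ∉ Icc 1 ℓ, v i = 0) ∧ Des ℓ v = J ∧
    (∀ x ∈ T, ∃ i ∈ Icc 1 ℓ, v i = x) ∧ v ℓ ≠ 1}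

theorem finite_seqsWithValues (ℓ : ℕ) (J : Set ℕ) (T : Finset ℕ) :
    (seqsWithValues ℓ J T).Finite :=
  (Set.finite_setOf_mem_and_eq_const_off (Icc 1 ℓ) _ (insert 1 T).finite_toSet 0).subset
    fun _ hv => ⟨hv.1, hv.2.1⟩

section Relabel

variable {T T' : Finset ℕ} (e : T ≃o T')

def relabel (x : ℕ) : ℕ :=
  if h : x ∈ T then e ⟨x, h⟩ else if x = 1 then 1 else 0

variable {e}

theorem relabel_of_mem {x : ℕ} (h : x ∈ T) : relabel e x = e ⟨x, h⟩ := dif_pos h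

theorem relabel_zero (hT : ∀ x ∈ T, 1 < x) : relabel e 0 = 0 := by
  have : 0 ∉ T := fun h => by simpa using hT 0 h
  simp [relabel, this]

theorem relabel_one (hT : ∀ x ∈ T, 1 < x) : relabel e 1 = 1 := by
  have : 1 ∉ T := fun h => by simpa using hT 1 h
  simp [relabel, this]

theorem relabel_eq_one_iff (hT : ∀ x ∈ T, 1 < x) (hT' : ∀ x ∈ T', 1 < x) {x : ℕ} :
    relabel e x = 1 ↔ x = 1 := by
  by_cases h : x ∈ T
  · have := hT' _ (e ⟨x, h⟩).2
    have := hT x h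
    rw [relabel_of_mem h]
    omega
  · unfold relabel
    split_ifs <;> simp_all

theorem strictMonoOn_relabel (hT : ∀ x ∈ T, 1 < x) (hT' : ∀ x ∈ T', 1 < x) :
    StrictMonoOn (relabel e) ↑(insert 1 T) := by
  intro x hx y hy hxy
  simp only [coe_insert, Set.mem_insert_iff, mem_coe] at hx hy
  rcases hx with rfl | hx <;> rcases hy with rfl | hy
  · exact absurd hxy (lt_irrefl 1)
  · rw [relabel_one hT, relabel_of_mem hy]; exact hT' _ (e _).2
  · exact absurd hxy (not_lt.2 (hT x hx).le)
  · rw [relabel_of_mem hx, relabel_of_mem hy]; exact e.strictMono hxy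

theorem relabel_mem_insert (hT : ∀ x ∈ T, 1 < x) {x : ℕ} (hx : x ∈ insert 1 T) :
    relabel e x ∈ insert 1 T' := by
  rcases mem_insert.1 hx with rfl | hx
  · rw [relabel_one hT]; exact mem_insert_self 1 T'
  · rw [relabel_of_mem hx]; exact mem_insert_of_mem (e _).2

theorem relabel_symm_apply {y : ℕ} (hy : y ∈ T') : relabel e (e.symm ⟨y, hy⟩) = y := by
  rw [relabel_of_mem (e.symm ⟨y, hy⟩).2, Subtype.coe_eta, e.apply_symm_apply]

theorem relabel_comp_mem_seqsWithValues (hT : ∀ x ∈ T, 1 < x) (hT' : ∀ x ∈ T', 1 < x)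
    {ℓ : ℕ} {J : Set ℕ} {v : ℕ → ℕ} (hv : v ∈ seqsWithValues ℓ J T) :
    relabel e ∘ v ∈ seqsWithValues ℓ J T' := by
  obtain ⟨hval, hzero, hdes, hcover, hlast⟩ := hv
  refine ⟨fun i hi => relabel_mem_insert hT (hval i hi), fun i hi => ?_, ?_,
    fun y hy => ?_, ?_⟩
  · simp only [Function.comp_apply, hzero i hi, relabel_zero hT]
  · rw [Des_comp_of_strictMonoOn (strictMonoOn_relabel hT hT') hval, hdes]
  · obtain ⟨i, hi, hvi⟩ := hcover _ (e.symm ⟨y, hy⟩).2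
    exact ⟨i, hi, by rw [Function.comp_apply, hvi, relabel_symm_apply]⟩
  · rwa [Function.comp_apply, Ne, relabel_eq_one_iff hT hT']

theorem injOn_relabel_comp (hT : ∀ x ∈ T, 1 < x) (hT' : ∀ x ∈ T', 1 < x) (ℓ : ℕ)
    (J : Set ℕ) : Set.InjOn (relabel e ∘ ·) (seqsWithValues ℓ J T) := by
  intro v hv w hw hvw
  funext i
  by_cases hi : i ∈ Icc 1 ℓ
  · exact (strictMonoOn_relabel hT hT').injOn (hv.1 i hi) (hw.1 i hi) (congrFun hvw i)
  · rw [hv.2.1 i hi, hw.2.1 i hi]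

end Relabel

theorem ncard_seqsWithValues_le {T T' : Finset ℕ} (hT : ∀ x ∈ T, 1 < x)
    (hT' : ∀ x ∈ T', 1 < x) (hcard : T.card = T'.card) (ℓ : ℕ) (J : Set ℕ) :
    (seqsWithValues ℓ J T).ncard ≤ (seqsWithValues ℓ J T').ncard := by
  let e : T ≃o T' := (T.orderIsoOfFin hcard).symm.trans (T'.orderIsoOfFin rfl)
  exact Set.ncard_le_ncard_of_injOn _ (fun v hv => relabel_comp_mem_seqsWithValues hT hT' hv)
    (injOn_relabel_comp (e := e) hT hT' ℓ J) (finite_seqsWithValues ℓ J T')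

theorem ncard_seqsWithValues_eq_of_card_eq {T T' : Finset ℕ} (hT : ∀ x ∈ T, 1 < x)
    (hT' : ∀ x ∈ T', 1 < x) (hcard : T.card = T'.card) (ℓ : ℕ) (J : Set ℕ) :
    (seqsWithValues ℓ J T).ncard = (seqsWithValues ℓ J T').ncard :=
  (ncard_seqsWithValues_le hT hT' hcard ℓ J).antisymm
    (ncard_seqsWithValues_le hT' hT hcard.symm ℓ J)

theorem seqsWithValues_eq_empty_of_lt_card {ℓ : ℕ} {T : Finset ℕ} (h : ℓ < T.card)
    (J : Set ℕ) :    seqsWithValues ℓ J T = ∅ := by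
  refine Set.eq_empty_of_forall_notMem fun v hv => h.not_ge ?_
  calc T.card ≤ ((Icc 1 ℓ).image v).card := card_le_card fun x hx => by
        obtain ⟨i, hi, rfl⟩ := hv.2.2.2.1 x hx
        exact mem_image_of_mem v hi
    _ ≤ (Icc 1 ℓ).card := card_image_le
    _ = ℓ := by simp

theorem bcoef_eq_ncard_seqsWithValues (I : Finset ℕ) (i : ℕ) :
    bcoef I i = (seqsWithValues (I.sup id) ↑(I.erase (I.sup id)) (Icc 2 (i + 1))).ncard := by
  have hIcc : insert 1 (Icc 2 (i + 1)) = Icc 1 (i + 1) :=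
    insert_Icc_add_one_left_eq_Icc (by omega)
  simp only [bcoef, seqsWithValues, Seqs, hIcc, Set.mem_ofPred_eq, and_assoc]

theorem bcoef_eq_zero_of_lt {I : Finset ℕ} {i : ℕ} (h : I.sup id < i) : bcoef I i = 0 := by
  rw [bcoef_eq_ncard_seqsWithValues, seqsWithValues_eq_empty_of_lt_card (by simpa),
    Set.ncard_empty]

def valsAboveOne (ℓ : ℕ) (v : ℕ → ℕ) : Finset ℕ :=
  ((Icc 1 ℓ).image v).filter (1 < ·)

theorem mem_valsAboveOne {ℓ x : ℕ} {v : ℕ → ℕ} :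
    x ∈ valsAboveOne ℓ v ↔ (∃ i ∈ Icc 1 ℓ, v i = x) ∧ 1 < x := by
  simp [valsAboveOne]

theorem valsAboveOne_eq_iff_mem_seqsWithValues {ℓ n : ℕ} {J : Set ℕ} {S : Finset ℕ}
    (hn : 1 ≤ n) (hS : S ⊆ Icc 2 n) {v : ℕ → ℕ} :
    (v ∈ Seqs ℓ n ∧ Des ℓ v = J ∧ v ℓ ≠ 1) ∧ valsAboveOne ℓ v = S ↔
      v ∈ seqsWithValues ℓ J S := by
  constructor
  · rintro ⟨⟨⟨hval, hzero⟩, hdes, hlast⟩, rfl⟩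
    refine ⟨fun i hi => ?_, hzero, hdes, fun x hx => (mem_valsAboveOne.1 hx).1, hlast⟩
    rcases eq_or_ne (v i) 1 with h1 | h1
    · exact h1 ▸ mem_insert_self _ _
    · have := (mem_Icc.1 (hval i hi)).1
      exact mem_insert_of_mem (mem_valsAboveOne.2 ⟨⟨i, hi, rfl⟩, by omega⟩)
  · rintro ⟨hval, hzero, hdes, hcover, hlast⟩
    refine ⟨⟨⟨fun i hi => ?_, hzero⟩, hdes, hlast⟩, ?_⟩
    · rcases mem_insert.1 (hval i hi) with h1 | h1
      · exact mem_Icc.2 ⟨h1.ge, h1 ▸ hn⟩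
      · have := mem_Icc.1 (hS h1)
        exact mem_Icc.2 ⟨by omega, this.2⟩
    · ext x
      rw [mem_valsAboveOne]
      constructor
      · rintro ⟨⟨i, hi, rfl⟩, h1⟩
        exact (mem_insert.1 (hval i hi)).resolve_left h1.ne'
      · intro hx
        exact ⟨hcover x hx, (mem_Icc.1 (hS hx)).1⟩

theorem ncard_eq_sum_powerset_ncard_seqsWithValues {ℓ n : ℕ} (J : Set ℕ) (hn : 1 ≤ n) :
    {v ∈ Seqs ℓ n | Des ℓ v = J ∧ v ℓ ≠ 1}.ncard =
      ∑ S ∈ (Icc 2 n).powerset, (seqsWithValues ℓ J S).ncard := by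
  have hfin : {v ∈ Seqs ℓ n | Des ℓ v = J ∧ v ℓ ≠ 1}.Finite :=
    (Set.finite_setOf_mem_and_eq_const_off (Icc 1 ℓ) _ (Icc 1 n).finite_toSet 0).subset
      fun _ hv => hv.1
  have hmaps : ∀ v ∈ hfin.toFinset, valsAboveOne ℓ v ∈ (Icc 2 n).powerset := by
    intro v hv
    rw [mem_powerset]
    intro x hx
    obtain ⟨⟨i, hi, rfl⟩, h1⟩ := mem_valsAboveOne.1 hx
    have := mem_Icc.1 ((hfin.mem_toFinset.1 hv).1.1 i hi)
    exact mem_Icc.2 ⟨h1, this.2⟩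
  rw [Set.ncard_eq_toFinset_card _ hfin, card_eq_sum_card_fiberwise hmaps]
  refine sum_congr rfl fun S hS => ?_
  rw [← Set.ncard_coe_finset]
  congr 1
  ext v
  simp only [coe_filter, Set.Finite.mem_toFinset, Set.mem_ofPred_eq]
  exact valsAboveOne_eq_iff_mem_seqsWithValues hn (mem_powerset.1 hS)

theorem Ncount_eq_sum_choose_mul_bcoef (I : Finset ℕ) {n : ℕ} (hn : 1 ≤ n) :
    Ncount I n = ∑ i ∈ range (I.sup id + 1), (n - 1).choose i * bcoef I i := by
  have hfiber : ∀ S ∈ (Icc 2 n).powerset,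
      (seqsWithValues (I.sup id) ↑(I.erase (I.sup id)) S).ncard = bcoef I S.card := by
    intro S hS
    rw [bcoef_eq_ncard_seqsWithValues]
    exact ncard_seqsWithValues_eq_of_card_eq (fun x hx => (mem_Icc.1 (mem_powerset.1 hS hx)).1)
      (fun x hx => (mem_Icc.1 hx).1) (by simp) _ _
  have hcard : (Icc 2 n).card = n - 1 := by simp
  rw [Ncount, ncard_eq_sum_powerset_ncard_seqsWithValues _ hn, sum_congr rfl hfiber,
    sum_powerset_apply_card, hcard]
  simp only [smul_eq_mul]
  have hchoose : ∀ i ≥ n - 1 + 1, (n - 1).choose i * bcoef I i = 0 := fun i hi => by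
    rw [Nat.choose_eq_zero_of_lt (by omega), zero_mul]
  have hbcoef : ∀ i ≥ I.sup id + 1, (n - 1).choose i * bcoef I i = 0 := fun i hi => by
    rw [bcoef_eq_zero_of_lt (by omega), mul_zero]
  rw [← eventually_constant_sum hchoose (Nat.le_add_right _ (I.sup id + 1)),
    eventually_constant_sum hbcoef (Nat.le_add_left _ _)]

theorem stmt_13_general (I : Finset ℕ) (k : ℤ) :
    ∃ a : ℕ → ℤ, ∀ n : ℕ, 1 ≤ n →
      (Ncount I n : ℚ) =
        ∑ i ∈ Finset.range (I.sup id + 1), (a i : ℚ) * genChoose ((n : ℤ) + k) i := by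
  obtain ⟨a, ha⟩ := exists_sum_choose_eq_sum_choose_add (fun i => bcoef I i) (I.sup id) (k + 1)
  refine ⟨a, fun n hn => ?_⟩
  have hshift : (((n - 1 : ℕ) : ℤ) + (k + 1)) = n + k := by omega
  have key : (Ncount I n : ℤ) =
      ∑ i ∈ range (I.sup id + 1), a i * Ring.choose ((n : ℤ) + k) i := by
    rw [← hshift, ← ha, Ncount_eq_sum_choose_mul_bcoef I hn]
    push_cast [Ring.choose_natCast]
    exact sum_congr rfl fun i _ => mul_comm _ _
  simp only [genChoose_eq_choose]
  exact_mod_cast key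

/-- for every integer `k`, there are integers `a_0,…,a_{α_t}` such that
`N(I,n) = Σ_{i=0}^{α_t} a_i · C(n+k, i)` for every positive integer `n`, where `C(·, i)`
is the generalized binomial coefficient. -/
theorem stmt_13 (I : Finset ℕ) (hI : I.Nonempty) (hIpos : ∀ x ∈ I, 1 ≤ x) (k : ℤ) :
    ∃ a : ℕ → ℤ, ∀ n : ℕ, 1 ≤ n →
      (Ncount I n : ℚ) =
        ∑ i ∈ Finset.range (I.sup id + 1), (a i : ℚ) * genChoose ((n : ℤ) + k) i :=
  stmt_13_general I k
end
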